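/- For the Poisson bi-vector P on ℝ³ with P^{12} = x²y, P^{13} = -x(xz+1), P^{23} = xyz, the first Kontsevich tetrahedral bi-vector Γ₁(P), defined componentwise by Γ₁(P)^{ij} = ∑ (∂³P^{ij}/∂x^k∂x^ℓ∂x^m)(∂P^{kk'}/∂x^{ℓ'})(∂P^{ℓℓ'}/∂x^{m'})(∂P^{mm'}/∂x^{k'}) (sum over all repeated indices from 1 to 3), has components Γ₁(P)^{12} = -6x⁵y, Γ₁(P)^{13} = -6x⁴(xz+1), Γ₁(P)^{23} = -6x³y. -/

import Mathlib

/-! Every entry of `P` is a polynomial, and on polynomials the partial derivatives `pd i` are the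
formal derivatives `pderiv i`. So `Γ₁(P)^{ij}` is the evaluation of a polynomial in `ℝ[x, y, z]`
built from `P` by formal differentiation alone, and the three components are polynomial
identities checked by normalisation. -/

/-- Partial derivative in the `i`-th coordinate direction on `ℝ³ = Fin 3 → ℝ`. -/
noncomputable def pd (i : Fin 3) (f : (Fin 3 → ℝ) → ℝ) : (Fin 3 → ℝ) → ℝ :=
  fun x => fderiv ℝ f x (Pi.single i 1)

/-- The specific bi-vector on `ℝ³` with `P^{12} = x²y`, `P^{13} = -x(xz+1)`,
`P^{23} = xyz`. -/
noncomputable def Pmat : (Fin 3 → ℝ) → Matrix (Fin 3) (Fin 3) ℝ := fun x =>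
  !![0, x 0 ^ 2 * x 1, -(x 0 * (x 0 * x 2 + 1));
     -(x 0 ^ 2 * x 1), 0, x 0 * x 1 * x 2;
     x 0 * (x 0 * x 2 + 1), -(x 0 * x 1 * x 2), 0]

/-- The entries of `Pmat` as functions on `ℝ³`. -/
noncomputable def Pf (i j : Fin 3) : (Fin 3 → ℝ) → ℝ := fun x => Pmat x i j

/-- The first Kontsevich tetrahedral bi-vector `Γ₁(P)`,
`Γ₁(P)^{ij} = ∑ ∂³P^{ij}/∂x^k∂x^ℓ∂x^m · ∂P^{kk'}/∂x^{ℓ'} · ∂P^{ℓℓ'}/∂x^{m'} · ∂P^{mm'}/∂x^{k'}`. -/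
noncomputable def Γ₁ (i j : Fin 3) : (Fin 3 → ℝ) → ℝ := fun x =>
  ∑ k, ∑ l, ∑ m, ∑ k', ∑ l', ∑ m',
    pd k (pd l (pd m (Pf i j))) x * pd l' (Pf k k') x * pd m' (Pf l l') x * pd k' (Pf m m') x

open MvPolynomial

theorem Derivation.map_ofNat {R A M : Type*} [CommSemiring R] [CommSemiring A] [Algebra R A]
    [AddCommMonoid M] [Module A M] [Module R M] (D : Derivation R A M) (n : ℕ) [n.AtLeastTwo] :
    D (no_index (OfNat.ofNat n : A)) = 0 :=
  D.map_natCast n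

theorem MvPolynomial.hasFDerivAt_eval {𝕜 σ : Type*} [NontriviallyNormedField 𝕜] [Fintype σ]
    (p : MvPolynomial σ 𝕜) (x : σ → 𝕜) :
    HasFDerivAt (fun y => eval y p)
      (∑ i, eval x (pderiv i p) • ContinuousLinearMap.proj (R := 𝕜) (φ := fun _ : σ => 𝕜) i) x := by
  classical
  induction p using MvPolynomial.induction_on with
  | C a =>
    simp only [eval_C, pderiv_C, map_zero]
    exact (hasFDerivAt_const (𝕜 := 𝕜) a x).congr_fderiv (by ext; simp)
  | add p q hp hq =>
    simp only [map_add]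
    refine (hp.fun_add hq).congr_fderiv ?_
    ext v
    simp [add_mul, Finset.sum_add_distrib]
  | mul_X p n hp =>
    simp only [map_mul, eval_X]
    refine (hp.fun_mul (hasFDerivAt_apply n x)).congr_fderiv ?_
    ext v
    simp [Derivation.leibniz, pderiv_X, Pi.single_apply, apply_ite, Finset.mul_sum, mul_assoc,
      add_mul, Finset.sum_add_distrib, ite_mul]

theorem pd_eval (i : Fin 3) (p : MvPolynomial (Fin 3) ℝ) :
    pd i (fun x => eval x p) = fun x => eval x (pderiv i p) := by
  funext x
  simp [pd, (hasFDerivAt_eval p x).fderiv, Pi.single_apply]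

noncomputable def tetrahedralBivector {σ R : Type*} [Fintype σ] [CommSemiring R]
    (P : Matrix σ σ (MvPolynomial σ R)) : Matrix σ σ (MvPolynomial σ R) :=
  Matrix.of fun i j => ∑ k, ∑ l, ∑ m, ∑ k', ∑ l', ∑ m',
    pderiv k (pderiv l (pderiv m (P i j))) * pderiv l' (P k k') * pderiv m' (P l l') *
      pderiv k' (P m m')

noncomputable def Ppoly : Matrix (Fin 3) (Fin 3) (MvPolynomial (Fin 3) ℝ) :=
  !![0, X 0 ^ 2 * X 1, -(X 0 * (X 0 * X 2 + 1));
     -(X 0 ^ 2 * X 1), 0, X 0 * X 1 * X 2;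
     X 0 * (X 0 * X 2 + 1), -(X 0 * X 1 * X 2), 0]

theorem Pf_eq_eval (i j : Fin 3) : Pf i j = fun x => eval x (Ppoly i j) := by
  funext x
  fin_cases i <;> fin_cases j <;> simp [Pf, Pmat, Ppoly]

theorem Γ₁_eq_eval (i j : Fin 3) (x : Fin 3 → ℝ) :
    Γ₁ i j x = eval x (tetrahedralBivector Ppoly i j) := by
  simp only [Γ₁, tetrahedralBivector, Pf_eq_eval, pd_eval, Matrix.of_apply, map_sum, map_mul]

section Computation

attribute [local simp] Ppoly tetrahedralBivector Fin.sum_univ_three Derivation.leibniz pderiv_X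
  Derivation.map_ofNat

theorem tetrahedralBivector_Ppoly_zero_one :
    tetrahedralBivector Ppoly 0 1 = -6 * X 0 ^ 5 * X 1 := by
  simp
  ring

theorem tetrahedralBivector_Ppoly_zero_two :
    tetrahedralBivector Ppoly 0 2 = -6 * X 0 ^ 4 * (X 0 * X 2 + 1) := by
  simp
  ring

theorem tetrahedralBivector_Ppoly_one_two :
    tetrahedralBivector Ppoly 1 2 = -6 * X 0 ^ 3 * X 1 := by
  simp
  ring

end Computation

theorem Γ₁_components :
    ∀ x : Fin 3 → ℝ,
      Γ₁ 0 1 x = -6 * x 0 ^ 5 * x 1 ∧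
      Γ₁ 0 2 x = -6 * x 0 ^ 4 * (x 0 * x 2 + 1) ∧
      Γ₁ 1 2 x = -6 * x 0 ^ 3 * x 1 := by
  intro x
  simp [Γ₁_eq_eval, tetrahedralBivector_Ppoly_zero_one, tetrahedralBivector_Ppoly_zero_two,
    tetrahedralBivector_Ppoly_one_two]
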